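/- arXiv:1807.08253 — 2 statements merged into one kernel-verified Lean document; each statement's English description precedes it below -/
import Mathlib

section
/- In the two-item exchange with sellers S1 (owning item A, value 0) and S2 (owning item B, value 0), buyer b1 with valuation v1({A,B})=10, v1({A})=v1({B})=0 and budget 3, and buyer b2 with valuation 4 for any nonempty subset of {A,B} and budget 2, there is no budget-feasible, individually rational, budget-balanced allocation with payments such that no coalition of a buyer and one or two sellers can deviate and make all its members strictly better off; i.e., the core with budget constraints is empty. -/
/- Two-item exchange: sellers of A(=0) and B(=1) with reserve 0;
   buyer b1: v({A,B})=10 else 0, budget 3; buyer b2: 4 for nonempty, budget 2.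
   The core with budget constraints is empty. -/

/-- Buyer valuations. -/
noncomputable def val0 : Fin 2 → Finset (Fin 2) → ℝ := fun i S =>
  if i = 0 then (if S = ({0, 1} : Finset (Fin 2)) then 10 else 0)
  else (if S = (∅ : Finset (Fin 2)) then 0 else 4)

/-- Buyer budgets. -/
noncomputable def bud0 : Fin 2 → ℝ := fun i => if i = 0 then 3 else 2

/-- Feasible outcome: disjoint bundles S1, S2 to the buyers; buyer payments p1, p2
    budget-feasible and individually rational; nonnegative seller receipts qA, qB
    (zero if the item is not sold); budget balance. -/
def Feasible0 (S1 S2 : Finset (Fin 2)) (p1 p2 qA qB : ℝ) : Prop :=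
  Disjoint S1 S2 ∧
  0 ≤ p1 ∧ p1 ≤ bud0 0 ∧ p1 ≤ val0 0 S1 ∧
  0 ≤ p2 ∧ p2 ≤ bud0 1 ∧ p2 ≤ val0 1 S2 ∧
  0 ≤ qA ∧ 0 ≤ qB ∧
  ((0 : Fin 2) ∉ S1 ∪ S2 → qA = 0) ∧ ((1 : Fin 2) ∉ S1 ∪ S2 → qB = 0) ∧
  p1 + p2 = qA + qB

/-- Every budget-feasible, individually rational, budget-balanced outcome is
    blocked by a coalition of one buyer and one or two sellers: the buyer obtains a
    bundle S' from the coalition sellers T, pays within his budget and valuation, and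
    every coalition member is strictly better off. -/
theorem core_with_budgets_empty :
    ∀ S1 S2 : Finset (Fin 2), ∀ p1 p2 qA qB : ℝ,
      Feasible0 S1 S2 p1 p2 qA qB →
      ∃ (i : Fin 2) (T S' : Finset (Fin 2)) (r : Fin 2 → ℝ),
        T.Nonempty ∧ S' ⊆ T ∧
        (∀ k ∈ T, 0 ≤ r k) ∧
        (∑ k ∈ T, r k) ≤ bud0 i ∧
        (∑ k ∈ T, r k) ≤ val0 i S' ∧
        (∀ k ∈ T, (if k = 0 then qA else qB) < r k) ∧
        (if i = 0 then val0 0 S1 - p1 else val0 1 S2 - p2) < val0 i S' - ∑ k ∈ T, r k := by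
  intro S1 S2 p1 p2 qA qB hF
  obtain ⟨hdisj, hp1n, hp1b, hp1v, hp2n, hp2b, hp2v, hqA, hqB, hA0, hB0, hbal⟩ := hF
  simp only [bud0, val0, if_true, if_false] at *
  by_cases h : S1 = ({0,1} : Finset (Fin 2))
  · -- buyer 1 holds both items; buyer 2 blocks with the cheaper seller
    have hS2 : S2 = ∅ := by
      rw [Finset.eq_empty_iff_forall_notMem]
      intro a ha
      have ha1 : a ∈ S1 := by rw [h]; fin_cases a <;> decide
      exact Finset.disjoint_left.mp hdisj ha1 ha
    have hp2 : p2 = 0 := by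
      have : p2 ≤ 0 := by simpa [hS2] using hp2v
      linarith
    have hsum : qA + qB ≤ 3 := by
      have : p1 ≤ 3 := by simpa using hp1b
      linarith
    by_cases hc : qA ≤ qB
    · have hqA2 : qA < 2 := by linarith
      refine ⟨1, {0}, {0}, fun _ => (qA + 2) / 2, ⟨0, by decide⟩, le_refl _, ?_, ?_, ?_, ?_, ?_⟩
      · intro k hk; linarith
      · simp; linarith
      · simp [Finset.singleton_ne_empty]; linarith
      · intro k hk
        simp only [Finset.mem_singleton] at hk
        subst hk
        simp; linarith
      · simp [hS2, hp2]
        have : ((∅ : Finset (Fin 2)) = ({0,1} : Finset (Fin 2))) = False := by decide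
        norm_num [Finset.singleton_ne_empty]
        linarith
    · push_neg at hc
      have hqB2 : qB < 2 := by linarith
      refine ⟨1, {1}, {1}, fun _ => (qB + 2) / 2, ⟨1, by decide⟩, le_refl _, ?_, ?_, ?_, ?_, ?_⟩
      · intro k hk; linarith
      · simp; linarith
      · simp [Finset.singleton_ne_empty]; linarith
      · intro k hk
        simp only [Finset.mem_singleton] at hk
        subst hk
        norm_num; linarith
      · simp [hS2, hp2]
        linarith
  · -- buyer 1 doesn't hold both; buyer 1 blocks with both sellers
    have hp1 : p1 = 0 := by
      have : p1 ≤ 0 := by simpa [h] using hp1v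
      linarith
    have hsum : qA + qB ≤ 2 := by
      have : p2 ≤ 2 := by simpa using hp2b
      linarith
    set δ : ℝ := (3 - qA - qB) / 2 with hδ
    have hδpos : 0 < δ := by rw [hδ]; linarith
    refine ⟨0, {0,1}, {0,1}, fun k => (if k = 0 then qA else qB) + δ, ⟨0, by decide⟩,
      le_refl _, ?_, ?_, ?_, ?_, ?_⟩
    · intro k hk
      fin_cases hk <;> simp <;> linarith
    · rw [Finset.sum_pair (by decide : (0 : Fin 2) ≠ 1)]
      norm_num; linarith
    · rw [Finset.sum_pair (by decide : (0 : Fin 2) ≠ 1)]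
      norm_num; linarith
    · intro k hk
      fin_cases hk <;> simp <;> linarith
    · rw [Finset.sum_pair (by decide : (0 : Fin 2) ≠ 1)]
      simp [h, hp1]
      linarith
end

section
/- If in a combinatorial exchange with budgets the allocation assigning no trades (autarky) together with zero payments is individually rational and budget-balanced, then the core is nonempty if and only if there exists a welfare level w ≥ 0 and an outcome of welfare w with d^C ≤ 0 for all coalitions C; in particular, whenever all buyers have budget 0 and all sellers have strictly positive reserve values for every nonempty bundle, the no-trade outcome is the unique core outcome. -/
/- Combinatorial exchange with budget-constrained buyers.  If the no-trade outcome
   with zero payments is feasible (individually rational and budget-balanced), then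
   the core is nonempty iff there is a welfare level w ≥ 0 and a core outcome of
   welfare w.  In particular, if all buyers have budget 0 and every seller has a
   strictly positive reserve for every nonempty bundle of his endowment, then the
   no-trade outcome is the unique core outcome. -/

structure Exchange (I J K : Type*) [DecidableEq K] where
  vb : I → Finset K → ℝ      -- buyer valuations
  Bud : I → ℝ                -- buyer budgets
  vs : J → Finset K → ℝ      -- seller reservation values
  owned : J → Finset K       -- seller endowments

structure Outcome (I J K : Type*) [DecidableEq K] where
  x : I → Finset K           -- bundle allocated to each buyer
  y : J → Finset K           -- bundle supplied by each seller
  p : I → ℝ                  -- buyer payments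
  q : J → ℝ                  -- seller receipts

variable {I J K : Type*} [Fintype I] [Fintype J] [DecidableEq K]

def Feasible (E : Exchange I J K) (ω : Outcome I J K) : Prop :=
  (∀ i i' : I, i ≠ i' → Disjoint (ω.x i) (ω.x i')) ∧
  (∀ j, ω.y j ⊆ E.owned j) ∧
  (∀ i, ∀ k ∈ ω.x i, ∃ j, k ∈ ω.y j) ∧
  (∀ i, 0 ≤ ω.p i) ∧
  (∀ i, ω.p i ≤ min (E.Bud i) (E.vb i (ω.x i))) ∧
  (∀ j, E.vs j (ω.y j) ≤ ω.q j) ∧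
  (∑ i, ω.p i = ∑ j, ω.q j)

/-- Coalition (IC, JC) blocks ω: an internal budget-feasible, individually rational,
budget-balanced reallocation of the coalition sellers' items makes every member
strictly better off. -/
def Blocks (E : Exchange I J K) (ω : Outcome I J K) (IC : Finset I) (JC : Finset J) : Prop :=
  (IC.Nonempty ∨ JC.Nonempty) ∧
  ∃ (x' : I → Finset K) (y' : J → Finset K) (p' : I → ℝ) (q' : J → ℝ),
    (∀ i ∉ IC, x' i = ∅) ∧ (∀ j ∉ JC, y' j = ∅) ∧
    (∀ i i' : I, i ≠ i' → Disjoint (x' i) (x' i')) ∧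
    (∀ j, y' j ⊆ E.owned j) ∧
    (∀ i, ∀ k ∈ x' i, ∃ j ∈ JC, k ∈ y' j) ∧
    (∀ i, 0 ≤ p' i) ∧
    (∀ i ∈ IC, p' i ≤ min (E.Bud i) (E.vb i (x' i))) ∧
    (∀ j ∈ JC, E.vs j (y' j) ≤ q' j) ∧
    (∑ i ∈ IC, p' i = ∑ j ∈ JC, q' j) ∧
    (∀ i ∈ IC, E.vb i (ω.x i) - ω.p i < E.vb i (x' i) - p' i) ∧
    (∀ j ∈ JC, ω.q j - E.vs j (ω.y j) < q' j - E.vs j (y' j))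

def Core (E : Exchange I J K) (ω : Outcome I J K) : Prop :=
  Feasible E ω ∧ ∀ (IC : Finset I) (JC : Finset J), ¬ Blocks E ω IC JC

noncomputable def Welfare (E : Exchange I J K) (ω : Outcome I J K) : ℝ :=
  (∑ i, E.vb i (ω.x i)) - ∑ j, E.vs j (ω.y j)

def noTrade : Outcome I J K := ⟨fun _ => ∅, fun _ => ∅, fun _ => 0, fun _ => 0⟩

theorem core_nonempty_iff_and_zero_budget_unique_core
    (E : Exchange I J K)
    (hvs0 : ∀ j, E.vs j (∅ : Finset K) = 0)
    (hNT : Feasible E (noTrade : Outcome I J K)) :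
    ((∃ ω : Outcome I J K, Core E ω) ↔
      (∃ w : ℝ, 0 ≤ w ∧ ∃ ω : Outcome I J K, Core E ω ∧ Welfare E ω = w)) ∧
    ((∀ i, E.Bud i = 0) →
      (∀ j, ∀ Z : Finset K, Z ⊆ E.owned j → Z.Nonempty → 0 < E.vs j Z) →
      Core E (noTrade : Outcome I J K) ∧
      ∀ ω : Outcome I J K, Core E ω →
        (∀ i, ω.x i = ∅) ∧ (∀ j, ω.y j = ∅) ∧ (∀ i, ω.p i = 0) ∧ (∀ j, ω.q j = 0)) := by

  constructor
  · constructor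
    · rintro ⟨ω, hω⟩
      refine ⟨Welfare E ω, ?_, ω, hω, rfl⟩
      obtain ⟨⟨_, _, _, hp0, hpv, hqv, hbal⟩, _⟩ := hω
      have h1 : ∑ i, ω.p i ≤ ∑ i, E.vb i (ω.x i) :=
        Finset.sum_le_sum fun i _ => le_trans (hpv i) (min_le_right _ _)
      have h2 : ∑ j, E.vs j (ω.y j) ≤ ∑ j, ω.q j :=
        Finset.sum_le_sum fun j _ => hqv j
      have : ∑ j, E.vs j (ω.y j) ≤ ∑ i, E.vb i (ω.x i) := by
        calc ∑ j, E.vs j (ω.y j) ≤ ∑ j, ω.q j := h2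
          _ = ∑ i, ω.p i := hbal.symm
          _ ≤ ∑ i, E.vb i (ω.x i) := h1
      unfold Welfare; linarith
    · rintro ⟨w, _, ω, hω, _⟩
      exact ⟨ω, hω⟩
  · intro hB0 hpos
    -- key: noTrade is not blocked
    have hcore : Core E (noTrade : Outcome I J K) := by
      refine ⟨hNT, ?_⟩
      rintro IC JC ⟨hne, x', y', p', q', hxout, hyout, hdisj, hown, hcov,
        hp0, hpv, hqv, hbal, hib, hjb⟩
      have hp'0 : ∀ i ∈ IC, p' i = 0 := by
        intro i hi
        have := hpv i hi
        have h2 := hp0 i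
        have : p' i ≤ 0 := le_trans (hpv i hi) (by rw [hB0 i]; exact min_le_left _ _)
        linarith
      rcases JC.eq_empty_or_nonempty with hJ | hJ
      · -- all x' empty, buyers can't improve
        have hIC : IC.Nonempty := by
          rcases hne with h | h
          · exact h
          · exact absurd h (by simp [hJ])
        obtain ⟨i, hi⟩ := hIC
        have hx' : x' i = ∅ := by
          rw [Finset.eq_empty_iff_forall_notMem]
          intro k hk
          obtain ⟨j, hj, _⟩ := hcov i k hk
          simp [hJ] at hj
        have := hib i hi
        simp only [noTrade, hx', hp'0 i hi] at this
        linarith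
      · -- sellers must get strictly positive, but sum of payments is 0
        have hqpos : ∀ j ∈ JC, 0 < q' j := by
          intro j hj
          have h1 := hjb j hj
          simp only [noTrade, hvs0 j] at h1
          have h2 : 0 ≤ E.vs j (y' j) := by
            rcases (y' j).eq_empty_or_nonempty with he | hne'
            · rw [he, hvs0]
            · exact le_of_lt (hpos j _ (hown j) hne')
          linarith
        have hsum : 0 < ∑ j ∈ JC, q' j :=
          Finset.sum_pos hqpos hJ
        have : ∑ i ∈ IC, p' i = 0 := Finset.sum_eq_zero hp'0
        rw [this] at hbal
        linarith
    refine ⟨hcore, ?_⟩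
    intro ω hω
    obtain ⟨⟨_, hown, hcov, hp0, hpv, hqv, hbal⟩, _⟩ := hω
    have hp : ∀ i, ω.p i = 0 := by
      intro i
      have h1 := hpv i
      rw [hB0 i] at h1
      have := hp0 i
      have := min_le_left (0:ℝ) (E.vb i (ω.x i))
      linarith
    have hq0 : ∀ j, 0 ≤ ω.q j := by
      intro j
      refine le_trans ?_ (hqv j)
      rcases (ω.y j).eq_empty_or_nonempty with he | hne'
      · rw [he, hvs0]
      · exact le_of_lt (hpos j _ (hown j) hne')
    have hsump : ∑ i, ω.p i = 0 := Finset.sum_eq_zero fun i _ => hp i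
    have hsumq : ∑ j, ω.q j = 0 := by rw [← hbal, hsump]
    have hq : ∀ j, ω.q j = 0 := by
      intro j
      have := (Finset.sum_eq_zero_iff_of_nonneg (fun j _ => hq0 j)).1 hsumq j (Finset.mem_univ j)
      exact this
    have hy : ∀ j, ω.y j = ∅ := by
      intro j
      by_contra h
      have hne' : (ω.y j).Nonempty := Finset.nonempty_iff_ne_empty.2 h
      have := hpos j _ (hown j) hne'
      have := hqv j
      have := hq j
      linarith
    have hx : ∀ i, ω.x i = ∅ := by
      intro i
      rw [Finset.eq_empty_iff_forall_notMem]
      intro k hk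
      obtain ⟨j, hj⟩ := hcov i k hk
      rw [hy j] at hj
      simp at hj
    exact ⟨hx, hy, hp, hq⟩
end
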